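/- Let Δ be an Eulerian simplicial complex of dimension 3 with n vertices. Then m_2(Δ) ≥ f_1(Δ)·(4·f_1(Δ) − n²)/(3n) − 2·(f_1(Δ) − n); equivalently, 3n·m_2(Δ) ≥ f_1(Δ)·(4·f_1(Δ) − n²) − 6n·(f_1(Δ) − n). -/

import Mathlib

/-- A finite abstract simplicial complex on vertex set `Fin n`: a collection of subsets of
`Fin n` (the faces) closed under taking subsets and containing every singleton. -/
structure AbsComplex (n : ℕ) where
  faces : Finset (Finset (Fin n))
  down_closed : ∀ F ∈ faces, ∀ G ⊆ F, G ∈ faces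
  singleton_mem : ∀ v : Fin n, ({v} : Finset (Fin n)) ∈ faces

namespace AbsComplex

variable {n : ℕ}

/-- `fNum Δ i` is the number of faces of `Δ` of cardinality `i + 1`
(i.e. of dimension `i`). -/
def fNum (Δ : AbsComplex n) (i : ℕ) : ℕ :=
  (Δ.faces.filter fun F => F.card = i + 1).card

/-- A missing face of `Δ`: a set which is not a face but all of whose proper subsets
are faces. -/
def IsMissing (Δ : AbsComplex n) (F : Finset (Fin n)) : Prop :=
  F ∉ Δ.faces ∧ ∀ G ⊂ F, G ∈ Δ.faces

/-- `mNum Δ i` is the number of missing faces of `Δ` of cardinality `i + 1`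
(i.e. of dimension `i`). -/
noncomputable def mNum (Δ : AbsComplex n) (i : ℕ) : ℕ :=
  {F : Finset (Fin n) | Δ.IsMissing F ∧ F.card = i + 1}.ncard

/-- The faces of the link of the face `F` in `Δ`: all faces `G` with `G ∩ F = ∅`
and `G ∪ F` a face. -/
def linkFaces (Δ : AbsComplex n) (F : Finset (Fin n)) : Finset (Finset (Fin n)) :=
  Δ.faces.filter fun G => G ∩ F = ∅ ∧ G ∪ F ∈ Δ.faces

/-- The reduced Euler characteristic `χ̃ = −1 + f₀ − f₁ + f₂ − ⋯` of a (downward closed,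
nonempty) collection of faces, computed as `∑_F (−1)^{|F|−1}` over all faces `F`
(including the empty face). -/
def reducedEuler (s : Finset (Finset (Fin n))) : ℤ :=
  ∑ F ∈ s, (-1 : ℤ) ^ (F.card + 1)

/-- `Δ.IsEulerianDim D` says that `Δ` is an Eulerian complex of dimension `D`: every face has
cardinality at most `D + 1`, some face has cardinality `D + 1`, and for every face `F`
(including the empty face) the reduced Euler characteristic of the link of `F` equals
`(−1)^{D − |F|}` (written as `(−1)^{D + |F|}`, which has the same parity). -/
def IsEulerianDim (Δ : AbsComplex n) (D : ℕ) : Prop :=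
  (∀ F ∈ Δ.faces, F.card ≤ D + 1) ∧ (∃ F ∈ Δ.faces, F.card = D + 1) ∧
    ∀ F ∈ Δ.faces, reducedEuler (Δ.linkFaces F) = (-1 : ℤ) ^ (D + F.card)

/-- `Δ` is `j`-neighborly: every `j`-element subset of the vertex set is a face. -/
def Neighborly (Δ : AbsComplex n) (j : ℕ) : Prop :=
  ∀ S : Finset (Fin n), S.card = j → S ∈ Δ.faces

/-- `Δ` is flag: every missing face has cardinality `2`. -/
def Flag (Δ : AbsComplex n) : Prop :=
  ∀ F : Finset (Fin n), Δ.IsMissing F → F.card = 2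

end AbsComplex

/-!
In an Eulerian 3-complex the link of a triangle has χ̃ = 1, so it is two points and every
triangle lies in exactly two facets: 2 f₂ = 4 f₃. With the Euler relation n − f₁ + f₂ − f₃ = 0
this gives f₂ = 2 (f₁ − n). The triangles of the 1-skeleton are the 2-faces together with the
missing 2-faces, so the 1-skeleton has t = f₂ + m₂ triangles. Finally a graph with n vertices and
e edges has t ≥ e (4e − n²) / (3n): an edge uv lies in at least deg u + deg v − n triangles,
summing over the edges gives 3t ≥ ∑ deg² − n e, and Cauchy–Schwarz gives n ∑ deg² ≥ (2e)².
-/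

open Finset

theorem Finset.sum_card_supersets_slice {α : Type*} [DecidableEq α] {𝒜 : Finset (Finset α)}
    (h𝒜 : IsLowerSet (𝒜 : Set (Finset α))) (k : ℕ) :
    ∑ s ∈ 𝒜 # k, #{t ∈ 𝒜 # (k + 1) | s ⊆ t} = (k + 1) * #(𝒜 # (k + 1)) := by
  have hbelow : ∀ t ∈ 𝒜 # (k + 1), {s ∈ 𝒜 # k | s ⊆ t} = t.powersetCard k := by
    intro t ht
    rw [mem_slice] at ht
    ext s
    simp only [mem_filter, mem_slice, mem_powersetCard]
    exact ⟨fun ⟨⟨_, hs⟩, hst⟩ => ⟨hst, hs⟩, fun ⟨hst, hs⟩ => ⟨⟨h𝒜 hst ht.1, hs⟩, hst⟩⟩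
  calc ∑ s ∈ 𝒜 # k, #{t ∈ 𝒜 # (k + 1) | s ⊆ t}
      = ∑ t ∈ 𝒜 # (k + 1), #{s ∈ 𝒜 # k | s ⊆ t} :=
        sum_card_bipartiteAbove_eq_sum_card_bipartiteBelow _
    _ = ∑ t ∈ 𝒜 # (k + 1), (k + 1) := by
        refine sum_congr rfl fun t ht => ?_
        rw [hbelow t ht, card_powersetCard, (mem_slice.mp ht).2, Nat.choose_succ_self_right]
    _ = (k + 1) * #(𝒜 # (k + 1)) := by rw [sum_const, smul_eq_mul, mul_comm]

namespace SimpleGraph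

variable {V : Type*} [Fintype V] [DecidableEq V] (G : SimpleGraph V) [DecidableRel G.Adj]

omit [Fintype V] [DecidableRel G.Adj] in
theorem isNClique_two_iff {s : Finset V} : G.IsNClique 2 s ↔ ∃ u w, G.Adj u w ∧ s = {u, w} := by
  constructor
  · rintro ⟨hs, h2⟩
    obtain ⟨u, w, huw, rfl⟩ := card_eq_two.mp h2
    exact ⟨u, w, isClique_pair.mp (by simpa using hs) huw, rfl⟩
  · rintro ⟨u, w, huw, rfl⟩
    exact ⟨by simpa using isClique_pair.mpr fun _ => huw, card_pair huw.ne⟩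

theorem card_filter_mem_cliqueFinset_two (v : V) :
    #{s ∈ G.cliqueFinset 2 | v ∈ s} = G.degree v := by
  rw [← card_neighborFinset_eq_degree]
  symm
  apply card_nbij (fun w => {v, w})
  · intro w hw
    simp only [mem_coe, mem_neighborFinset] at hw
    simp only [mem_coe, mem_filter, mem_cliqueFinset_iff, isNClique_two_iff]
    exact ⟨⟨v, w, hw, rfl⟩, mem_insert_self _ _⟩
  · intro w hw w' hw' h
    simp only [mem_coe, mem_neighborFinset] at hw hw'
    have : w ∈ ({v, w'} : Finset V) := by
      rw [← show ({v, w} : Finset V) = {v, w'} from h]; simp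
    simpa [hw.ne'] using this
  · intro s hs
    simp only [mem_coe, mem_filter, mem_cliqueFinset_iff, isNClique_two_iff] at hs
    obtain ⟨⟨a, b, hab, rfl⟩, hv⟩ := hs
    rcases mem_insert.mp hv with rfl | hv
    · exact ⟨b, by simpa using hab, rfl⟩
    · rw [mem_singleton.mp hv]
      exact ⟨a, by simpa using hab.symm, pair_comm _ _⟩

theorem sum_sum_cliqueFinset_two {M : Type*} [AddCommMonoid M] (f : V → M) :
    ∑ s ∈ G.cliqueFinset 2, ∑ v ∈ s, f v = ∑ v, G.degree v • f v := by
  rw [sum_comm' (t' := univ) (s' := fun v => {s ∈ G.cliqueFinset 2 | v ∈ s}) (by simp)]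
  simp [← card_filter_mem_cliqueFinset_two]

theorem degree_add_degree_le (u w : V) :
    G.degree u + G.degree w ≤ #(G.neighborFinset u ∩ G.neighborFinset w) + Fintype.card V := by
  rw [← card_neighborFinset_eq_degree, ← card_neighborFinset_eq_degree,
    ← card_union_add_card_inter, add_comm]
  exact Nat.add_le_add_left (card_le_univ _) _

theorem card_neighborFinset_inter_le {u w : V} (huw : G.Adj u w) :
    #(G.neighborFinset u ∩ G.neighborFinset w) ≤ #{t ∈ G.cliqueFinset 3 | {u, w} ⊆ t} := by
  apply card_le_card_of_injOn (fun x => {x, u, w})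
  · intro x hx
    simp only [coe_inter, Set.mem_inter_iff, mem_coe, mem_neighborFinset] at hx
    simp only [mem_coe, mem_filter, mem_cliqueFinset_iff, is3Clique_triple_iff]
    exact ⟨⟨hx.1.symm, hx.2.symm, huw⟩, subset_insert _ _⟩
  · intro x hx y hy h
    simp only [coe_inter, Set.mem_inter_iff, mem_coe, mem_neighborFinset] at hx hy
    have : x ∈ ({y, u, w} : Finset V) := by
      rw [← show ({x, u, w} : Finset V) = {y, u, w} from h]; simp
    simpa [hx.1.ne', hx.2.ne'] using this

theorem sum_degree_le_card_supersets_add_card {s : Finset V} (hs : s ∈ G.cliqueFinset 2) :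
    ∑ v ∈ s, G.degree v ≤ #{t ∈ G.cliqueFinset 3 | s ⊆ t} + Fintype.card V := by
  obtain ⟨u, w, huw, rfl⟩ := (G.isNClique_two_iff).mp (mem_cliqueFinset_iff.mp hs)
  rw [sum_pair huw.ne]
  exact (G.degree_add_degree_le u w).trans (by gcongr; exact G.card_neighborFinset_inter_le huw)

theorem cliqueFinset_eq_slice (k : ℕ) : G.cliqueFinset k = {s | G.IsClique s} # k := by
  ext s
  simp [mem_slice, isNClique_iff]

theorem isLowerSet_cliques :
    IsLowerSet (({s | G.IsClique s} : Finset (Finset V)) : Set (Finset V)) :=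
  fun _ _ hts hs => by simpa using (by simpa using hs : G.IsClique _).subset hts

theorem sum_card_supersets_cliqueFinset_two :
    ∑ s ∈ G.cliqueFinset 2, #{t ∈ G.cliqueFinset 3 | s ⊆ t} = 3 * #(G.cliqueFinset 3) := by
  simp only [cliqueFinset_eq_slice]
  exact sum_card_supersets_slice G.isLowerSet_cliques 2

theorem card_cliqueFinset_two_mul_le_card_cliqueFinset_three :
    (4 * #(G.cliqueFinset 2) - (Fintype.card V : ℤ) ^ 2) * #(G.cliqueFinset 2) ≤
      3 * Fintype.card V * #(G.cliqueFinset 3) := by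
  set e : ℤ := (#(G.cliqueFinset 2) : ℤ)
  set N : ℤ := (Fintype.card V : ℤ)
  have hdeg : ∑ v, (G.degree v : ℤ) = 2 * e := by
    have := G.sum_sum_cliqueFinset_two (fun _ => (1 : ℤ))
    simp only [sum_const, nsmul_eq_mul, mul_one] at this
    rw [← this, sum_congr rfl fun s hs => by rw [(mem_cliqueFinset_iff.mp hs).card_eq]]
    simp [e, mul_comm]
  have hsq : ∑ v, (G.degree v : ℤ) ^ 2 - N * e ≤ 3 * #(G.cliqueFinset 3) := calc
    ∑ v, (G.degree v : ℤ) ^ 2 - N * e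
        = ∑ s ∈ G.cliqueFinset 2, (∑ v ∈ s, (G.degree v : ℤ) - N) := by
          rw [sum_sub_distrib, G.sum_sum_cliqueFinset_two]
          simp [sq, e, mul_comm]
      _ ≤ ∑ s ∈ G.cliqueFinset 2, (#{t ∈ G.cliqueFinset 3 | s ⊆ t} : ℤ) := by
          refine sum_le_sum fun s hs => ?_
          have := G.sum_degree_le_card_supersets_add_card hs
          zify at this
          linarith
      _ = 3 * #(G.cliqueFinset 3) := by
          exact_mod_cast G.sum_card_supersets_cliqueFinset_two
  have hcs : (∑ v, (G.degree v : ℤ)) ^ 2 ≤ N * ∑ v, (G.degree v : ℤ) ^ 2 := by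
    simpa using sq_sum_le_card_mul_sum_sq (s := univ) (f := fun v => (G.degree v : ℤ))
  rw [hdeg] at hcs
  nlinarith [mul_le_mul_of_nonneg_left hsq (by positivity : 0 ≤ N)]

end SimpleGraph

namespace AbsComplex

variable {n : ℕ} (Δ : AbsComplex n)

theorem isLowerSet_faces : IsLowerSet (Δ.faces : Set (Finset (Fin n))) :=
  fun _ _ hts hs => Δ.down_closed _ hs _ hts

theorem fNum_eq_card_slice (i : ℕ) : Δ.fNum i = #(Δ.faces # (i + 1)) := rfl

theorem fNum_zero : Δ.fNum 0 = n := by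
  have h : Δ.faces # 1 = univ.map ⟨fun v => {v}, singleton_injective⟩ := by
    ext F
    simp only [mem_slice, mem_map, mem_univ, true_and, Function.Embedding.coeFn_mk, card_eq_one]
    constructor
    · rintro ⟨-, v, rfl⟩
      exact ⟨v, rfl⟩
    · rintro ⟨v, rfl⟩
      exact ⟨Δ.singleton_mem v, v, rfl⟩
  rw [fNum_eq_card_slice, h, card_map, card_univ, Fintype.card_fin]

theorem reducedEuler_linkFaces (T : Finset (Fin n)) :
    reducedEuler (Δ.linkFaces T) = ∑ F ∈ Δ.faces with T ⊆ F, (-1 : ℤ) ^ (#F + #T + 1) := by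
  apply sum_nbij' (· ∪ T) (· \ T)
  · intro G hG
    simp only [linkFaces, mem_filter] at hG ⊢
    exact ⟨hG.2.2, subset_union_right⟩
  · intro F hF
    simp only [linkFaces, mem_filter, sdiff_union_of_subset (mem_filter.mp hF).2] at hF ⊢
    exact ⟨Δ.down_closed _ hF.1 _ sdiff_subset, sdiff_inter_self _ _, hF.1⟩
  · intro G hG
    simp only [linkFaces, mem_filter] at hG
    exact union_sdiff_cancel_right (disjoint_iff_inter_eq_empty.mpr hG.2.1)
  · intro F hF
    exact sdiff_union_of_subset (mem_filter.mp hF).2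
  · intro G hG
    simp only [linkFaces, mem_filter] at hG
    rw [card_union_of_disjoint (disjoint_iff_inter_eq_empty.mpr hG.2.1)]
    rw [show #G + #T + #T + 1 = #G + 1 + 2 * #T by ring, pow_add _ (#G + 1), pow_mul, neg_one_sq,
      one_pow, mul_one]

theorem linkFaces_empty : Δ.linkFaces ∅ = Δ.faces :=
  filter_true_of_mem fun F hF => by simpa using hF

def skeleton : SimpleGraph (Fin n) where
  Adj u v := u ≠ v ∧ {u, v} ∈ Δ.faces
  symm := ⟨fun u v h => ⟨h.1.symm, pair_comm u v ▸ h.2⟩⟩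
  loopless := ⟨fun _ h => h.1 rfl⟩

instance : DecidableRel Δ.skeleton.Adj :=
  fun u v => inferInstanceAs (Decidable (u ≠ v ∧ {u, v} ∈ Δ.faces))

theorem cliqueFinset_two_skeleton : Δ.skeleton.cliqueFinset 2 = Δ.faces # 2 := by
  ext s
  rw [SimpleGraph.mem_cliqueFinset_iff, SimpleGraph.isNClique_two_iff, mem_slice]
  constructor
  · rintro ⟨u, w, huw, rfl⟩
    exact ⟨huw.2, card_pair huw.1⟩
  · rintro ⟨hs, h2⟩
    obtain ⟨u, w, huw, rfl⟩ := card_eq_two.mp h2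
    exact ⟨u, w, ⟨huw, hs⟩, rfl⟩

theorem isNClique_three_skeleton_iff {s : Finset (Fin n)} :
    Δ.skeleton.IsNClique 3 s ↔ (∀ t ⊂ s, t ∈ Δ.faces) ∧ #s = 3 := by
  refine ⟨fun ⟨hs, h3⟩ => ⟨fun t hts => ?_, h3⟩, fun ⟨hs, h3⟩ => ⟨fun u hu w hw huw => ?_, h3⟩⟩
  · have hlt : #t < 3 := h3 ▸ card_lt_card hts
    interval_cases ht : #t
    · obtain ⟨v, hv⟩ := card_pos.mp (by omega : 0 < #s)
      exact Δ.down_closed _ (Δ.singleton_mem v) _ (by simp [card_eq_zero.mp ht])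
    · obtain ⟨v, rfl⟩ := card_eq_one.mp ht
      exact Δ.singleton_mem v
    · obtain ⟨u, w, huw, rfl⟩ := card_eq_two.mp ht
      exact (hs (hts.subset (by simp)) (hts.subset (by simp)) huw).2
  · refine ⟨huw, hs _ (ssubset_of_subset_of_ne ?_ ?_)⟩
    · exact insert_subset hu (singleton_subset_iff.mpr hw)
    rintro rfl
    simp [card_pair huw] at h3

theorem card_cliqueFinset_three_skeleton :
    #(Δ.skeleton.cliqueFinset 3) = Δ.fNum 2 + Δ.mNum 2 := by
  rw [← card_filter_add_card_filter_not (· ∈ Δ.faces)]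
  congr 1
  · rw [fNum_eq_card_slice]
    congr 1
    ext s
    simp only [mem_filter, SimpleGraph.mem_cliqueFinset_iff, isNClique_three_skeleton_iff,
      mem_slice]
    exact ⟨fun ⟨⟨_, h3⟩, hs⟩ => ⟨hs, h3⟩,
      fun ⟨hs, h3⟩ => ⟨⟨fun t hts => Δ.down_closed s hs t hts.subset, h3⟩, hs⟩⟩
  · rw [mNum, ← Set.ncard_coe_finset]
    congr 1
    ext s
    simp [isNClique_three_skeleton_iff, IsMissing, and_comm, and_left_comm]

namespace IsEulerianDim

variable {Δ} {D : ℕ}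

theorem card_supersets_eq_two (h : Δ.IsEulerianDim D) {T : Finset (Fin n)} (hT : T ∈ Δ.faces)
    (hTc : #T = D) : #{F ∈ Δ.faces # (D + 1) | T ⊆ F} = 2 := by
  have hsplit : {F ∈ Δ.faces | T ⊆ F} = insert T {F ∈ Δ.faces # (D + 1) | T ⊆ F} := by
    ext F
    simp only [mem_filter, mem_insert, mem_slice]
    constructor
    · rintro ⟨hF, hTF⟩
      rcases (h.1 F hF).lt_or_eq with hlt | heq
      · exact Or.inl (eq_of_subset_of_card_le hTF (by omega)).symm
      · exact Or.inr ⟨⟨hF, heq⟩, hTF⟩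
    · rintro (rfl | ⟨⟨hF, -⟩, hTF⟩)
      exacts [⟨hT, subset_rfl⟩, ⟨hF, hTF⟩]
  have hnotmem : T ∉ {F ∈ Δ.faces # (D + 1) | T ⊆ F} := by
    simp [mem_slice, hTc]
  have := h.2.2 T hT
  rw [reducedEuler_linkFaces, hsplit, sum_insert hnotmem,
    sum_congr rfl fun F hF => by rw [(mem_slice.mp (mem_filter.mp hF).1).2, hTc]] at this
  simp only [hTc, sum_const, nsmul_eq_mul] at this
  norm_num [pow_succ, ← two_mul, pow_mul] at this
  omega

theorem two_mul_fNum (h : Δ.IsEulerianDim (D + 1)) :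
    2 * Δ.fNum D = (D + 2) * Δ.fNum (D + 1) := by
  rw [fNum_eq_card_slice, fNum_eq_card_slice, ← sum_card_supersets_slice Δ.isLowerSet_faces,
    sum_congr rfl fun T hT => h.card_supersets_eq_two (mem_slice.mp hT).1 (mem_slice.mp hT).2,
    sum_const, smul_eq_mul, mul_comm]

theorem alternating_sum_fNum (h : Δ.IsEulerianDim D) :
    ∑ i ∈ range (D + 1), (-1 : ℤ) ^ i * Δ.fNum i = 1 + (-1) ^ D := by
  obtain ⟨F, hF, -⟩ := h.2.1
  have hempty : (∅ : Finset (Fin n)) ∈ Δ.faces := Δ.down_closed F hF ∅ (empty_subset F)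
  have hslice0 : Δ.faces # 0 = {∅} := by
    ext G
    simp only [mem_slice, card_eq_zero, mem_singleton]
    exact ⟨And.right, fun hG => ⟨hG ▸ hempty, hG⟩⟩
  have := h.2.2 ∅ hempty
  rw [linkFaces_empty, reducedEuler, ← sum_fiberwise_of_maps_to (t := range (D + 2))
    (fun G hG => mem_range.mpr (Nat.lt_succ_of_le (h.1 G hG)))] at this
  have hfiber : ∀ i, ∑ G ∈ Δ.faces with #G = i, (-1 : ℤ) ^ (#G + 1) =
      (-1) ^ (i + 1) * #(Δ.faces # i) := by
    intro i
    rw [sum_congr rfl fun G hG => by rw [(mem_filter.mp hG).2], sum_const, nsmul_eq_mul, mul_comm]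
    rfl
  simp only [hfiber, sum_range_succ' _ (D + 1), hslice0, card_singleton] at this
  simp only [← fNum_eq_card_slice, pow_succ, pow_zero, mul_neg_one, neg_neg, card_empty,
    add_zero, Nat.cast_one] at this
  linarith

theorem fNum_two_eq (h : Δ.IsEulerianDim 3) : (Δ.fNum 2 : ℤ) = 2 * (Δ.fNum 1 - n) := by
  have hEuler := h.alternating_sum_fNum
  simp only [sum_range_succ, sum_range_zero, fNum_zero] at hEuler
  have hPseudo : (2 * Δ.fNum 2 : ℤ) = 4 * Δ.fNum 3 := by exact_mod_cast h.two_mul_fNum (D := 2)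
  norm_num at hEuler
  linarith

end IsEulerianDim

end AbsComplex

open AbsComplex in
/-- For an Eulerian complex `Δ` of dimension `3` with `n` vertices,
`3n·m_2(Δ) ≥ f_1(Δ)·(4·f_1(Δ) − n²) − 6n·(f_1(Δ) − n)`. -/
theorem statement6 {n : ℕ} (Δ : AbsComplex n) (hEul : Δ.IsEulerianDim 3) :
    3 * (n : ℤ) * (Δ.mNum 2 : ℤ) ≥
      (Δ.fNum 1 : ℤ) * (4 * (Δ.fNum 1 : ℤ) - (n : ℤ) ^ 2) -
        6 * (n : ℤ) * ((Δ.fNum 1 : ℤ) - (n : ℤ)) := by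
  have hTriangles := Δ.skeleton.card_cliqueFinset_two_mul_le_card_cliqueFinset_three
  rw [cliqueFinset_two_skeleton, ← fNum_eq_card_slice, card_cliqueFinset_three_skeleton,
    Fintype.card_fin] at hTriangles
  push_cast at hTriangles
  rw [hEul.fNum_two_eq] at hTriangles
  linarith
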